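/- Let Σ be a finite alphabet, let # be a symbol not in Σ, and let L ⊆ Σ*. Define L' = L ∪ {w#u : w ∈ L, u ∈ (Σ∪{#})*} ⊆ (Σ∪{#})*. Then L = Σ* if and only if L' is cofinite in (Σ∪{#})*, i.e. (Σ∪{#})* \ L' is finite. -/

import Mathlib

/-!
Every word over `Σ ∪ {#}` either contains no `#` or splits uniquely at its first `#`, so
`L'` is everything when `L = Σ*`. Conversely, if `w ∉ L`, then none of the infinitely many
words `w#^(n+1)` lies in `L'`.
-/

/-- `L' = L ∪ L#(Σ ∪ {#})*`, with the fresh letter `#` modelled by `none`. -/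
def hashExtension {σ : Type} (L : Set (List σ)) : Set (List (Option σ)) :=
  {v | (∃ w ∈ L, v = w.map some) ∨ (∃ w ∈ L, ∃ u : List (Option σ), v = w.map some ++ none :: u)}

theorem eq_map_some_or_eq_map_some_append_none_cons {σ : Type} (v : List (Option σ)) :
    (∃ w : List σ, v = w.map some) ∨ ∃ (w : List σ) (u : List (Option σ)),
      v = w.map some ++ none :: u := by
  induction v with
  | nil => exact Or.inl ⟨[], rfl⟩
  | cons a v ih =>
    cases a with
    | none => exact Or.inr ⟨[], v, rfl⟩
    | some s =>
      rcases ih with ⟨w, rfl⟩ | ⟨w, u, rfl⟩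
      · exact Or.inl ⟨s :: w, rfl⟩
      · exact Or.inr ⟨s :: w, u, rfl⟩

theorem map_some_append_none_cons_left_injective {σ : Type} {w w' : List σ}
    {u u' : List (Option σ)} (h : w.map some ++ none :: u = w'.map some ++ none :: u') :
    w = w' := by
  induction w generalizing w' with
  | nil => cases w' <;> simp_all
  | cons x xs ih =>
    cases w' with
    | nil => simp at h
    | cons y ys =>
      simp only [List.map_cons, List.cons_append, List.cons.injEq, Option.some.injEq] at h
      exact congrArg₂ _ h.1 (ih h.2)

theorem hashExtension_univ {σ : Type} : hashExtension (Set.univ : Set (List σ)) = Set.univ :=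
  Set.eq_univ_of_forall fun v => by
    simpa [hashExtension] using eq_map_some_or_eq_map_some_append_none_cons v

theorem map_some_append_none_cons_mem_hashExtension_iff {σ : Type} {L : Set (List σ)}
    {w : List σ} {u : List (Option σ)} :
    w.map some ++ none :: u ∈ hashExtension L ↔ w ∈ L := by
  refine ⟨?_, fun hw => Or.inr ⟨w, hw, u, rfl⟩⟩
  rintro (⟨w', -, hv⟩ | ⟨w', hw', u', hv⟩)
  · have : none ∈ w'.map some := hv ▸ by simp
    simp at this
  · rwa [map_some_append_none_cons_left_injective hv]

theorem hashExtension_compl_infinite_of_not_mem {σ : Type} {L : Set (List σ)} {w : List σ}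
    (hw : w ∉ L) : (hashExtension L)ᶜ.Infinite := by
  have hinj : Function.Injective fun n : ℕ => w.map some ++ none :: List.replicate n none :=
    fun m n h => by simpa using congrArg List.length h
  exact Set.infinite_of_injective_forall_mem hinj fun n =>
    map_some_append_none_cons_mem_hashExtension_iff.not.mpr hw

theorem universality_iff_cofinite_general {σ : Type} (L : Set (List σ)) :
    L = Set.univ ↔
      ({v : List (Option σ) |
          (∃ w ∈ L, v = w.map some) ∨
          (∃ w ∈ L, ∃ u : List (Option σ), v = w.map some ++ none :: u)}ᶜ).Finite := by
  change L = Set.univ ↔ (hashExtension L)ᶜ.Finite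
  constructor
  · rintro rfl
    simp [hashExtension_univ]
  · intro hfin
    by_contra hL
    obtain ⟨w, hw⟩ := (Set.ne_univ_iff_exists_notMem L).mp hL
    exact hashExtension_compl_infinite_of_not_mem hw hfin

/-- Let `#` be a fresh letter (modelled by `none` in `Option σ`, letters of `Σ`
being `some`-letters) and `L ⊆ Σ*`. Let `L' = L ∪ {w#u : w ∈ L, u ∈ (Σ∪{#})*}`. Then
`L = Σ*` iff `L'` is cofinite in `(Σ∪{#})*`. -/
theorem universality_iff_cofinite {σ : Type} [Fintype σ] (L : Set (List σ)) :
    L = Set.univ ↔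
      ({v : List (Option σ) |
          (∃ w ∈ L, v = w.map some) ∨
          (∃ w ∈ L, ∃ u : List (Option σ), v = w.map some ++ none :: u)}ᶜ).Finite :=
  universality_iff_cofinite_general L
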